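/- For every T ∈ M_r(ℂ) and λ ∈ (0,1), the matrices T and Δ_λ(T) have the same characteristic polynomial; in particular they have the same spectrum with the same algebraic multiplicities. -/

import Mathlib

open Matrix
open scoped ComplexOrder

/-- `|T| = (Tᴴ T)^{1/2}`, the positive semidefinite absolute value of a matrix. -/
noncomputable def matAbs {n : Type*} [Fintype n] [DecidableEq n]
    (T : Matrix n n ℂ) : Matrix n n ℂ :=
  (Matrix.posSemidef_conjTranspose_mul_self T).1.eigenvectorUnitary.1 *
    diagonal ((↑) ∘ (√·) ∘ (Matrix.posSemidef_conjTranspose_mul_self T).1.eigenvalues) *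
    (star (Matrix.posSemidef_conjTranspose_mul_self T).1.eigenvectorUnitary : Matrix n n ℂ)

/-- Real power `P^l` of a Hermitian matrix, via the functional calculus
(junk value `0` if `P` is not Hermitian). -/
noncomputable def hermPow {n : Type*} [Fintype n] [DecidableEq n]
    (P : Matrix n n ℂ) (l : ℝ) : Matrix n n ℂ :=
  if h : P.IsHermitian then h.cfc (fun x : ℝ => x ^ l) else 0

/-- The λ-Aluthge transform `|T|^λ U |T|^{1-λ}`, where `U` is a polar part of `T`. -/
noncomputable def aluthge {n : Type*} [Fintype n] [DecidableEq n]
    (l : ℝ) (U T : Matrix n n ℂ) : Matrix n n ℂ :=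
  hermPow (matAbs T) l * U * hermPow (matAbs T) (1 - l)

/-! Writing `Δ_λ(T) = |T|^λ · (U |T|^{1-λ})` and using that `AB` and `BA` have the same
characteristic polynomial, swap the two factors: `U |T|^{1-λ} |T|^λ = U |T| = T`. -/

variable {n : Type*} [Fintype n] [DecidableEq n]

theorem Matrix.spectrum_eq_of_charpoly_eq {K : Type*} [Field K] {A B : Matrix n n K}
    (h : A.charpoly = B.charpoly) : spectrum K A = spectrum K B := by
  ext μ
  rw [mem_spectrum_iff_isRoot_charpoly, mem_spectrum_iff_isRoot_charpoly, h]

theorem posSemidef_matAbs (T : Matrix n n ℂ) : (matAbs T).PosSemidef :=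
  (posSemidef_diagonal_iff.2
    fun _ => Complex.zero_le_real.2 (Real.sqrt_nonneg _)).mul_mul_conjTranspose_same _

theorem hermPow_eq_cfc {P : Matrix n n ℂ} (hP : P.IsHermitian) (l : ℝ) :
    hermPow P l = cfc (fun x : ℝ => x ^ l) P := by
  rw [hermPow, dif_pos hP, hP.cfc_eq]

theorem hermPow_one {P : Matrix n n ℂ} (hP : P.IsHermitian) : hermPow P 1 = P := by
  simp only [hermPow_eq_cfc hP, Real.rpow_one]
  exact cfc_id' ℝ P hP.isSelfAdjoint

theorem hermPow_mul_hermPow {P : Matrix n n ℂ} (hP : P.PosSemidef) {a b : ℝ} (hab : a + b ≠ 0) :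
    hermPow P a * hermPow P b = hermPow P (a + b) := by
  have hcont (c : ℝ) : ContinuousOn (fun x : ℝ => x ^ c) (spectrum ℝ P) :=
    P.finite_real_spectrum.continuousOn _
  rw [hermPow_eq_cfc hP.1, hermPow_eq_cfc hP.1, hermPow_eq_cfc hP.1,
    ← cfc_mul _ _ P (hcont a) (hcont b)]
  refine cfc_congr fun x hx => (Real.rpow_add' ?_ hab).symm
  rw [hP.1.spectrum_real_eq_range_eigenvalues] at hx
  obtain ⟨i, rfl⟩ := hx
  exact hP.eigenvalues_nonneg i

theorem charpoly_aluthge_eq (l : ℝ) {T U : Matrix n n ℂ} (hpolar : T = U * matAbs T) :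
    (aluthge l U T).charpoly = T.charpoly := by
  have hP := posSemidef_matAbs T
  calc (aluthge l U T).charpoly
      = (hermPow (matAbs T) l * (U * hermPow (matAbs T) (1 - l))).charpoly := by
        rw [aluthge, mul_assoc]
    _ = (U * (hermPow (matAbs T) (1 - l) * hermPow (matAbs T) l)).charpoly := by
        rw [charpoly_mul_comm, mul_assoc]
    _ = T.charpoly := by
        rw [hermPow_mul_hermPow hP (by simp), sub_add_cancel, hermPow_one hP.1, ← hpolar]

theorem charpoly_aluthge_general {r : ℕ} (l : ℝ)
    (T U : Matrix (Fin r) (Fin r) ℂ)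
    (hpolar : T = U * matAbs T) :
    (aluthge l U T).charpoly = T.charpoly ∧
    spectrum ℂ (aluthge l U T) = spectrum ℂ T :=
  ⟨charpoly_aluthge_eq l hpolar, spectrum_eq_of_charpoly_eq (charpoly_aluthge_eq l hpolar)⟩

/-- `T` and `Δ_λ(T)` have the same characteristic polynomial,
and in particular the same spectrum. -/
theorem charpoly_aluthge {r : ℕ} (l : ℝ) (hl : l ∈ Set.Ioo (0 : ℝ) 1)
    (T U : Matrix (Fin r) (Fin r) ℂ)
    (hU : U ∈ Matrix.unitaryGroup (Fin r) ℂ) (hpolar : T = U * matAbs T) :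
    (aluthge l U T).charpoly = T.charpoly ∧
    spectrum ℂ (aluthge l U T) = spectrum ℂ T :=
  charpoly_aluthge_general l T U hpolar
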